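/- Cluster cardinality is monotone under centre restriction: let T be a trajectory, Δ ≥ 0, and let [c, d] ⊆ [a, b]. If (T[a,b], 𝒫) is a Δ-cluster (every member of 𝒫 is a subtrajectory of T at discrete Fréchet distance at most Δ from T[a,b], and the index intervals of distinct members of 𝒫 are pairwise disjoint), then there exists a Δ-cluster (T[c,d], 𝒫') with |𝒫'| ≥ |𝒫|. -/

import Mathlib

/-- One step of a discrete walk: each coordinate stays or decreases by one. -/
def Step (p q : ℕ × ℕ) : Prop :=
  (q.1 = p.1 ∨ q.1 + 1 = p.1) ∧ (q.2 = p.2 ∨ q.2 + 1 = p.2)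

/-- A discrete walk from `(x, y)` down to `(1, 1)`. -/
def IsWalk (F : List (ℕ × ℕ)) (x y : ℕ) : Prop :=
  F.head? = some (x, y) ∧ F.getLast? = some (1, 1) ∧ List.Chain' Step F

/-- The cost of a discrete walk: maximum pointwise distance along the walk. -/
noncomputable def walkCost (P Q : ℕ → ℝ × ℝ) (F : List (ℕ × ℕ)) : ℝ :=
  (F.map fun p => dist (P p.1) (Q p.2)).foldr max 0

/-- The discrete Fréchet distance between the sequences `P 1, …, P x` and `Q 1, …, Q y`. -/
noncomputable def dF (P : ℕ → ℝ × ℝ) (x : ℕ) (Q : ℕ → ℝ × ℝ) (y : ℕ) : ℝ :=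
  sInf {c | ∃ F, IsWalk F x y ∧ walkCost P Q F = c}

/-- The subtrajectory of `T` starting at index `a`, reindexed from `1`. -/
def subtraj (T : ℕ → ℝ × ℝ) (a : ℕ) : ℕ → ℝ × ℝ := fun i => T (a + i - 1)

/-- `(T[a,b], Ps)` is a `Δ`-cluster: members of `Ps` are subtrajectories (given by their
index intervals) at discrete Fréchet distance at most `Δ` from the centre `T[a,b]`,
the index intervals of distinct members are pairwise disjoint, and the centre is a member. -/
def IsCluster (T : ℕ → ℝ × ℝ) (Δ : ℝ) (a b : ℕ) (Ps : Finset (ℕ × ℕ)) : Prop :=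
  (a, b) ∈ Ps ∧
  (∀ p ∈ Ps, 1 ≤ p.1 ∧ p.1 ≤ p.2 ∧
    dF (subtraj T a) (b - a + 1) (subtraj T p.1) (p.2 - p.1 + 1) ≤ Δ) ∧
  ∀ p ∈ Ps, ∀ q ∈ Ps, p ≠ q → Disjoint (Finset.Icc p.1 p.2) (Finset.Icc q.1 q.2)

/-!
Along a walk the row index moves by at most one per step, so a walk of `T[a,b]` against
`T[x,y]` passes through the rows of `[c,d]` in one contiguous stretch, which, translated, is a
walk of `T[c,d]` against some `T[x',y']` with `[x',y'] ⊆ [x,y]`, of no larger cost. The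
discrete Fréchet distance is attained by a walk, so every member of the cluster shrinks to a
subinterval at distance at most `Δ` from `T[c,d]`; the centre shrinks to `[c,d]` itself.
Shrinking nonempty intervals keeps disjoint members disjoint, hence distinct.
-/

theorem List.exists_eq_append_cons_of_isChain {α : Type*} {f : α → ℕ} {n : ℕ} :
    ∀ {l : List α} {a z : α}, l.IsChain (fun x y => f y ≤ f x + 1) → l.head? = some a →
      l.getLast? = some z → f a ≤ n → n ≤ f z → ∃ L b R, l = L ++ b :: R ∧ f b = n
  | [], _, _, _, ha, _, _, _ => by simp at ha
  | [x], a, z, _, ha, hz, han, hnz => by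
    obtain rfl : x = a := by simpa using ha
    obtain rfl : x = z := by simpa using hz
    exact ⟨[], x, [], rfl, by omega⟩
  | x :: y :: t, a, z, hl, ha, hz, han, hnz => by
    obtain rfl : x = a := by simpa using ha
    by_cases hx : n ≤ f x
    · exact ⟨[], x, y :: t, rfl, by omega⟩
    · obtain ⟨hxy, hl⟩ := List.isChain_cons_cons.1 hl
      obtain ⟨L, b, R, hyt, hb⟩ :=
        exists_eq_append_cons_of_isChain hl rfl (by simpa using hz) (by omega) hnz
      exact ⟨x :: L, b, R, by rw [hyt, List.cons_append], hb⟩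

lemma Step.le {p q : ℕ × ℕ} (h : Step p q) : q ≤ p :=
  Prod.mk_le_mk.2 ⟨by rcases h.1 with h | h <;> omega, by rcases h.2 with h | h <;> omega⟩

lemma Step.fst_le_add_one {p q : ℕ × ℕ} (h : Step p q) : p.1 ≤ q.1 + 1 := by
  rcases h.1 with h | h <;> omega

lemma List.IsChain.mem_Icc_of_step {l : List (ℕ × ℕ)} (hl : l.IsChain Step) {x z p : ℕ × ℕ}
    (hx : l.head? = some x) (hz : l.getLast? = some z) (hp : p ∈ l) : p ∈ Set.Icc z x := by
  refine ⟨hl.backwards_induction (z ≤ ·) _ (fun _ _ h hy => hy.trans h.le) ?_ p hp,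
    hl.induction (· ≤ x) _ (fun _ _ h hy => h.le.trans hy) ?_ p hp⟩
  · intro hne; rw [(List.getLast_eq_iff_getLast?_eq_some hne).2 hz]
  · intro hne; rw [(List.head_eq_iff_head?_eq_some hne).2 hx]

namespace IsWalk

variable {F L R : List (ℕ × ℕ)} {X Y : ℕ}

lemma mem_Icc (hF : IsWalk F X Y) {p : ℕ × ℕ} (hp : p ∈ F) : p ∈ Set.Icc (1, 1) (X, Y) :=
  List.IsChain.mem_Icc_of_step hF.2.2 hF.1 hF.2.1 hp

lemma exists_eq_append_cons (hF : IsWalk F X Y) {n : ℕ} (hn : 1 ≤ n) (hnX : n ≤ X) :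
    ∃ L b R, F = L ++ b :: R ∧ b.1 = n := by
  have hrev : F.reverse.IsChain fun p q => q.1 ≤ p.1 + 1 :=
    (List.isChain_reverse.2 hF.2.2).imp fun _ _ h => h.fst_le_add_one
  obtain ⟨L, b, R, h, hb⟩ := List.exists_eq_append_cons_of_isChain hrev
    (by simpa using hF.2.1) (by simpa using hF.1) hn hnX
  refine ⟨R.reverse, b, L.reverse, ?_, hb⟩
  rw [← List.reverse_reverse F, h]
  simp

lemma suffix {b : ℕ × ℕ} (hF : IsWalk (L ++ b :: R) X Y) : IsWalk (b :: R) b.1 b.2 :=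
  ⟨rfl, by simpa [List.getLast?_append_of_ne_nil] using hF.2.1,
    List.IsChain.right_of_append hF.2.2⟩

end IsWalk

def stairWalk (X Y : ℕ) : List (ℕ × ℕ) :=
  (List.range (max X Y)).reverse.map fun k => (min X (k + 1), min Y (k + 1))

lemma isWalk_stairWalk {X Y : ℕ} (hX : 1 ≤ X) (hY : 1 ≤ Y) : IsWalk (stairWalk X Y) X Y := by
  refine ⟨?_, ?_, ?_⟩
  · rw [stairWalk, List.head?_map, List.head?_reverse, List.getLast?_range, if_neg (by omega)]
    simp only [Option.map_some, Option.some.injEq, Prod.mk.injEq]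
    omega
  · rw [stairWalk, List.getLast?_map, List.getLast?_reverse, List.head?_range, if_neg (by omega)]
    simp only [Option.map_some, Option.some.injEq, Prod.mk.injEq]
    omega
  · rw [List.Chain', stairWalk, List.isChain_map, List.isChain_reverse, List.isChain_range]
    intro m _
    constructor <;> omega

section walkCost

variable (P Q : ℕ → ℝ × ℝ) {F G : List (ℕ × ℕ)}

lemma walkCost_le_iff {K : ℝ} :
    walkCost P Q F ≤ K ↔ 0 ≤ K ∧ ∀ p ∈ F, dist (P p.1) (Q p.2) ≤ K := by
  induction F with
  | nil => simp [walkCost]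
  | cons p F ih =>
    simp only [walkCost, List.map_cons, List.foldr_cons, max_le_iff, List.mem_cons,
      forall_eq_or_imp] at ih ⊢
    rw [ih]; tauto

lemma walkCost_nonneg : 0 ≤ walkCost P Q F :=
  ((walkCost_le_iff P Q).1 le_rfl).1

lemma dist_le_walkCost {p : ℕ × ℕ} (hp : p ∈ F) : dist (P p.1) (Q p.2) ≤ walkCost P Q F :=
  ((walkCost_le_iff P Q).1 le_rfl).2 p hp

lemma walkCost_mono (h : G ⊆ F) : walkCost P Q G ≤ walkCost P Q F :=
  (walkCost_le_iff P Q).2 ⟨walkCost_nonneg P Q, fun _ hp => dist_le_walkCost P Q (h hp)⟩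

lemma walkCost_eq_zero_or_exists :
    walkCost P Q F = 0 ∨ ∃ p ∈ F, walkCost P Q F = dist (P p.1) (Q p.2) := by
  induction F with
  | nil => exact Or.inl rfl
  | cons p F ih =>
    change max (dist (P p.1) (Q p.2)) (walkCost P Q F) = 0 ∨ _
    rcases max_choice (dist (P p.1) (Q p.2)) (walkCost P Q F) with h | h <;> rw [h]
    · exact Or.inr ⟨p, List.mem_cons_self, h⟩
    · rcases ih with ih | ⟨q, hq, ih⟩
      · exact Or.inl ih
      · exact Or.inr ⟨q, List.mem_cons_of_mem _ hq, h.trans ih⟩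

end walkCost

section dF

variable (P Q : ℕ → ℝ × ℝ) {X Y : ℕ}

lemma dF_nonneg : 0 ≤ dF P X Q Y :=
  Real.sInf_nonneg fun _ ⟨_, _, hF⟩ => hF ▸ walkCost_nonneg P Q

lemma dF_le_walkCost {F : List (ℕ × ℕ)} (hF : IsWalk F X Y) : dF P X Q Y ≤ walkCost P Q F :=
  csInf_le ⟨0, fun _ ⟨_, _, hF⟩ => hF ▸ walkCost_nonneg P Q⟩ ⟨F, hF, rfl⟩

-- Walk costs lie in the finite set `{0} ∪ {dist (P i) (Q j) | (i, j) ≤ (X, Y)}`.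
lemma exists_walkCost_eq_dF (hX : 1 ≤ X) (hY : 1 ≤ Y) :
    ∃ F, IsWalk F X Y ∧ walkCost P Q F = dF P X Q Y := by
  have hfin : {c | ∃ F, IsWalk F X Y ∧ walkCost P Q F = c}.Finite := by
    refine (((Set.finite_Icc (1, 1) (X, Y)).image
      fun p : ℕ × ℕ => dist (P p.1) (Q p.2)).insert 0).subset ?_
    rintro _ ⟨F, hF, rfl⟩
    rcases walkCost_eq_zero_or_exists P Q (F := F) with h | ⟨p, hp, h⟩
    · exact Or.inl h
    · exact Or.inr ⟨p, hF.mem_Icc hp, h.symm⟩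
  have hne : {c | ∃ F, IsWalk F X Y ∧ walkCost P Q F = c}.Nonempty :=
    ⟨_, stairWalk X Y, isWalk_stairWalk hX hY, rfl⟩
  exact hne.csInf_mem hfin

lemma dF_self {n : ℕ} (hn : 1 ≤ n) : dF P n P n = 0 := by
  refine le_antisymm ((dF_le_walkCost P P (isWalk_stairWalk hn hn)).trans ?_) (dF_nonneg P P)
  refine (walkCost_le_iff P P).2 ⟨le_rfl, fun p hp => ?_⟩
  obtain ⟨k, -, rfl⟩ := List.mem_map.1 hp
  simp

end dF

def rebase (o p : ℕ × ℕ) : ℕ × ℕ := (p.1 + 1 - o.1, p.2 + 1 - o.2)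

lemma Step.rebase {o p q : ℕ × ℕ} (h : Step p q) (hq : o ≤ q) :
    Step (rebase o p) (rebase o q) := by
  obtain ⟨hq1, hq2⟩ := Prod.mk_le_mk.1 hq
  unfold _root_.rebase Step at *
  omega

lemma walkCost_map_rebase (P Q : ℕ → ℝ × ℝ) {o : ℕ × ℕ} {H : List (ℕ × ℕ)}
    (hH : ∀ p ∈ H, o ≤ p) :
    walkCost (subtraj P o.1) (subtraj Q o.2) (H.map (rebase o)) = walkCost P Q H := by
  unfold walkCost
  rw [List.map_map]
  congr 1
  refine List.map_congr_left fun p hp => ?_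
  obtain ⟨h1, h2⟩ := Prod.mk_le_mk.1 (hH p hp)
  simp only [Function.comp_apply, rebase, subtraj]
  congr 3 <;> omega

lemma isWalk_map_rebase {H : List (ℕ × ℕ)} (hH : H.IsChain Step) {x o : ℕ × ℕ}
    (hx : H.head? = some x) (ho : H.getLast? = some o) :
    IsWalk (H.map (rebase o)) (x.1 + 1 - o.1) (x.2 + 1 - o.2) := by
  refine ⟨by simp [hx, rebase], by simp [ho, rebase], ?_⟩
  refine (List.isChain_map _).2 (hH.imp_of_mem_imp fun p q _ hq h => h.rebase ?_)
  exact (hH.mem_Icc_of_step hx ho hq).1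

theorem IsWalk.exists_restrict (P Q : ℕ → ℝ × ℝ) {F : List (ℕ × ℕ)} {X Y : ℕ}
    (hF : IsWalk F X Y) {C D : ℕ} (hC : 1 ≤ C) (hCD : C ≤ D) (hDX : D ≤ X) :
    ∃ j k G, 1 ≤ j ∧ j ≤ k ∧ k ≤ Y ∧ IsWalk G (D + 1 - C) (k + 1 - j) ∧
      walkCost (subtraj P C) (subtraj Q j) G ≤ walkCost P Q F := by
  obtain ⟨L, s, S, rfl, hs⟩ := hF.exists_eq_append_cons (hC.trans hCD) hDX
  have hS := hF.suffix
  obtain ⟨M, t, R, hMR, ht⟩ := hS.exists_eq_append_cons hC (hs ▸ hCD)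
  have hHS : M ++ [t] ++ R = s :: S := by simp [hMR]
  have hH : (M ++ [t]).IsChain Step := List.IsChain.left_of_append (hHS ▸ hS.2.2)
  have hHhead : (M ++ [t]).head? = some s := by
    rw [← List.head?_append_of_ne_nil _ (by simp), hHS, List.head?_cons]
  have hHlast : (M ++ [t]).getLast? = some t := List.getLast?_concat
  have ht1 : (1, 1) ≤ t := (hS.mem_Icc (by simp [hMR])).1
  have hsY : s ≤ (X, Y) := (hF.mem_Icc (by simp)).2
  have hts : t ≤ s := (hH.mem_Icc_of_step hHhead hHlast (by simp)).2
  simp only [Prod.le_def] at ht1 hsY hts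
  refine ⟨t.2, s.2, (M ++ [t]).map (rebase t), ht1.2, hts.2, hsY.2, ?_, ?_⟩
  · simpa only [hs, ht] using isWalk_map_rebase hH hHhead hHlast
  · rw [← ht, walkCost_map_rebase P Q fun p hp => (hH.mem_Icc_of_step hHhead hHlast hp).1]
    refine walkCost_mono P Q fun p hp => ?_
    rw [← hHS]
    exact List.mem_append_right L (List.mem_append_left R hp)

theorem exists_dF_subtraj_le (P Q : ℕ → ℝ × ℝ) {X Y C D : ℕ} (hC : 1 ≤ C) (hCD : C ≤ D)
    (hDX : D ≤ X) (hY : 1 ≤ Y) :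
    ∃ j k, 1 ≤ j ∧ j ≤ k ∧ k ≤ Y ∧
      dF (subtraj P C) (D + 1 - C) (subtraj Q j) (k + 1 - j) ≤ dF P X Q Y := by
  obtain ⟨F, hF, hcost⟩ := exists_walkCost_eq_dF P Q (hC.trans (hCD.trans hDX)) hY
  obtain ⟨j, k, G, hj, hjk, hkY, hG, hGF⟩ := hF.exists_restrict P Q hC hCD hDX
  exact ⟨j, k, hj, hjk, hkY, (dF_le_walkCost _ _ hG).trans (hGF.trans hcost.le)⟩

lemma subtraj_subtraj (T : ℕ → ℝ × ℝ) (a : ℕ) {C : ℕ} (hC : 1 ≤ C) :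
    subtraj (subtraj T a) C = subtraj T (a + C - 1) := by
  funext i
  simp only [subtraj]
  congr 1
  omega

theorem exists_subinterval_dF_le (T : ℕ → ℝ × ℝ) {a b c d x y : ℕ} (hac : a ≤ c)
    (hcd : c ≤ d) (hdb : d ≤ b) (hxy : x ≤ y) :
    ∃ x' y', x ≤ x' ∧ x' ≤ y' ∧ y' ≤ y ∧
      dF (subtraj T c) (d - c + 1) (subtraj T x') (y' - x' + 1) ≤
        dF (subtraj T a) (b - a + 1) (subtraj T x) (y - x + 1) := by
  obtain ⟨j, k, hj, hjk, hky, h⟩ := exists_dF_subtraj_le (subtraj T a) (subtraj T x)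
    (X := b - a + 1) (Y := y - x + 1) (C := c + 1 - a) (D := d + 1 - a)
    (by omega) (by omega) (by omega) (by omega)
  rw [subtraj_subtraj T a (by omega), subtraj_subtraj T x hj] at h
  refine ⟨x + j - 1, x + k - 1, by omega, by omega, by omega, ?_⟩
  convert h using 3 <;> omega

lemma IsCluster.image_of_subinterval {T : ℕ → ℝ × ℝ} {Δ : ℝ} {a b c d : ℕ}
    {Ps : Finset (ℕ × ℕ)} (h : IsCluster T Δ a b Ps) (g : ℕ × ℕ → ℕ × ℕ)
    (hcentre : g (a, b) = (c, d))
    (hg : ∀ p ∈ Ps, p.1 ≤ (g p).1 ∧ (g p).1 ≤ (g p).2 ∧ (g p).2 ≤ p.2 ∧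
      dF (subtraj T c) (d - c + 1) (subtraj T (g p).1) ((g p).2 - (g p).1 + 1) ≤ Δ) :
    IsCluster T Δ c d (Ps.image g) ∧ (Ps.image g).card = Ps.card := by
  classical
  obtain ⟨hab, hPs, hdisj⟩ := h
  have hsub : ∀ p ∈ Ps, Finset.Icc (g p).1 (g p).2 ⊆ Finset.Icc p.1 p.2 :=
    fun p hp => Finset.Icc_subset_Icc (hg p hp).1 (hg p hp).2.2.1
  have hinj : Set.InjOn g Ps := by
    intro p hp q hq hpq
    by_contra hne
    have hmem : (g p).1 ∈ Finset.Icc (g p).1 (g p).2 := Finset.left_mem_Icc.2 (hg p hp).2.1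
    exact Finset.disjoint_left.1 (hdisj p hp q hq hne) (hsub p hp hmem) (hsub q hq (hpq ▸ hmem))
  refine ⟨⟨hcentre ▸ Finset.mem_image_of_mem g hab, ?_, ?_⟩, Finset.card_image_of_injOn hinj⟩
  · simp only [Finset.forall_mem_image]
    intro p hp
    obtain ⟨h1, h2, -, h4⟩ := hg p hp
    exact ⟨(hPs p hp).1.trans h1, h2, h4⟩
  · simp only [Finset.forall_mem_image]
    intro p hp q hq hne
    exact (hdisj p hp q hq (ne_of_apply_ne g hne)).mono (hsub p hp) (hsub q hq)

/-- cluster cardinality is monotone under centre restriction: if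
(T[a,b], Ps) is a Δ-cluster and [c,d] ⊆ [a,b], then there is a Δ-cluster (T[c,d], Ps')
with at least as many members. -/
theorem cluster_card_mono (T : ℕ → ℝ × ℝ) (Δ : ℝ) (hΔ : 0 ≤ Δ)
    (a b c d : ℕ) (hac : a ≤ c) (hcd : c ≤ d) (hdb : d ≤ b)
    (Ps : Finset (ℕ × ℕ)) (h : IsCluster T Δ a b Ps) :
    ∃ Ps' : Finset (ℕ × ℕ), IsCluster T Δ c d Ps' ∧ Ps.card ≤ Ps'.card := by
  have hshrink : ∀ p ∈ Ps, ∃ q : ℕ × ℕ, (p.1 ≤ q.1 ∧ q.1 ≤ q.2 ∧ q.2 ≤ p.2 ∧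
      dF (subtraj T c) (d - c + 1) (subtraj T q.1) (q.2 - q.1 + 1) ≤ Δ) ∧
      (p = (a, b) → q = (c, d)) := by
    intro p hp
    by_cases hcentre : p = (a, b)
    · refine ⟨(c, d), ?_, fun _ => rfl⟩
      subst hcentre
      exact ⟨hac, hcd, hdb, (dF_self _ (by omega)).trans_le hΔ⟩
    · obtain ⟨-, hp12, hpΔ⟩ := h.2.1 p hp
      obtain ⟨x, y, hx, hxy, hy, hdist⟩ := exists_subinterval_dF_le T hac hcd hdb hp12
      exact ⟨(x, y), ⟨hx, hxy, hy, hdist.trans hpΔ⟩, fun hab => (hcentre hab).elim⟩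
  choose! g hg hcentre using hshrink
  obtain ⟨hcluster, hcard⟩ := h.image_of_subinterval g (hcentre _ h.1 rfl) hg
  exact ⟨Ps.image g, hcluster, hcard.ge⟩
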